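/- arXiv:1311.0046 — 3 statements merged into one kernel-verified Lean document; each statement's English description precedes it below -/
import Mathlib

section
/- Let ρ ⊂ ℝ² be a polygon with rational vertices and S a side of ρ. Then there exist A ∈ SL(2,ℤ), integers m, n, and a positive integer p such that the set D = A·(p·ρ) + (m,n) satisfies: D ⊆ {(x,y) : x ≤ 0}, and D ∩ {(x,y) : x = 0} equals the side A·(p·S) + (m,n) of the polygon D. -/
open Filter Topology

/-- The linear action of a matrix `A ∈ SL(2,ℤ)` on `ℝ²`. -/
def matAct (A : Matrix.SpecialLinearGroup (Fin 2) ℤ) (v : ℝ × ℝ) : ℝ × ℝ :=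
  (((A.1 0 0 : ℤ) : ℝ) * v.1 + ((A.1 0 1 : ℤ) : ℝ) * v.2,
   ((A.1 1 0 : ℤ) : ℝ) * v.1 + ((A.1 1 1 : ℤ) : ℝ) * v.2)

/-!
The side `S` is an exposed face of `ρ`, so by Krein–Milman it is the convex hull of its extreme
points, which are vertices of `ρ`. Hence the line of `S` passes through two distinct rational
points, its direction is rational, and some positive multiple `t • ν` of the normal is a primitive
integer vector `(u, w)`. By Bézout, `(u, w)` is the first row of some `A ∈ SL(2,ℤ)`, so the first
coordinate of `A z` is `t ⟪z, ν⟫`. The value `t c` taken on `S` is rational; dilating by its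
denominator `p` and translating by its numerator moves the line of `S` onto `{x = 0}` and `ρ`
into `{x ≤ 0}`.
-/

section Faces

variable {E : Type*} [AddCommGroup E] [Module ℝ E] [TopologicalSpace E]

theorem isExtreme_inter_eq_of_le (l : E →L[ℝ] ℝ) {A : Set E} {c : ℝ}
    (hA : ∀ x ∈ A, l x ≤ c) : IsExtreme ℝ A (A ∩ {x | l x = c}) := by
  refine ⟨Set.inter_subset_left, fun x hx y hy z hz hxyz => ⟨hx, ?_⟩⟩
  obtain ⟨a, b, ha, hb, hab, rfl⟩ := hxyz
  have hz' : a * l x + b * l y = c := by simpa using hz.2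
  have hgap : a * (c - l x) + b * (c - l y) = 0 := by linear_combination c * hab - hz'
  refine le_antisymm (hA x hx) (not_lt.1 fun hlt => ?_)
  linarith [mul_pos ha (sub_pos.2 hlt), mul_nonneg hb.le (sub_nonneg.2 (hA y hy))]

variable [T2Space E] [IsTopologicalAddGroup E] [ContinuousSMul ℝ E] [LocallyConvexSpace ℝ E]

theorem IsCompact.extremePoints_nontrivial {s : Set E} (hs : IsCompact s) (hconv : Convex ℝ s)
    (hnt : s.Nontrivial) : (s.extremePoints ℝ).Nontrivial := by
  by_contra h
  rw [Set.not_nontrivial_iff] at h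
  apply hnt.not_subsingleton
  rwa [← closure_convexHull_extremePoints hs hconv, h.convex.convexHull_eq, h.closure_eq]

theorem Set.Finite.nontrivial_inter_of_convexHull_inter {V : Set E} (hV : V.Finite) (l : E →L[ℝ] ℝ)
    {c : ℝ} (hle : ∀ x ∈ convexHull ℝ V, l x ≤ c)
    (hnt : (convexHull ℝ V ∩ {x | l x = c}).Nontrivial) : (V ∩ {x | l x = c}).Nontrivial := by
  have hface := isExtreme_inter_eq_of_le l hle
  have hcompact : IsCompact (convexHull ℝ V ∩ {x | l x = c}) :=
    (hV.isCompact_convexHull ℝ).inter_right (isClosed_eq l.continuous continuous_const)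
  have hconv : Convex ℝ (convexHull ℝ V ∩ {x | l x = c}) :=
    (convex_convexHull ℝ V).inter (convex_hyperplane l.toLinearMap.isLinear c)
  refine (hcompact.extremePoints_nontrivial hconv hnt).mono fun x hx =>
    ⟨?_, (extremePoints_subset hx).2⟩
  exact extremePoints_convexHull_subset (hface.extremePoints_subset_extremePoints hx)

end Faces

theorem Rat.exists_pos_mul_eq_isCoprime {r s : ℚ} (h : r ≠ 0 ∨ s ≠ 0) :
    ∃ κ : ℚ, 0 < κ ∧ ∃ u w : ℤ, IsCoprime u w ∧ (u : ℚ) = κ * r ∧ (w : ℚ) = κ * s := by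
  have hg : 0 < Int.gcd (r.num * s.den) (s.num * r.den) := by
    refine Int.gcd_pos_iff.2 (h.imp (fun hr => ?_) fun hs => ?_) <;> positivity
  obtain ⟨g, u, w, hg, hcop, hu, hw⟩ := Int.exists_gcd_one' hg
  refine ⟨r.den * s.den / g, by positivity, u, w, Int.isCoprime_iff_gcd_eq_one.2 hcop, ?_, ?_⟩
  · have hu' : (u : ℚ) * g = r.num * s.den := by exact_mod_cast hu.symm
    rw [← Rat.mul_den_eq_num] at hu'
    field_simp
    linear_combination hu'
  · have hw' : (w : ℚ) * g = s.num * r.den := by exact_mod_cast hw.symm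
    rw [← Rat.mul_den_eq_num] at hw'
    field_simp
    linear_combination hw'

theorem exists_pos_smul_eq_rat_of_orthogonal {ν : ℝ × ℝ} (hν : ν ≠ 0) {d₁ d₂ : ℚ}
    (hd : d₁ ≠ 0 ∨ d₂ ≠ 0) (horth : (d₁ : ℝ) * ν.1 + d₂ * ν.2 = 0) :
    ∃ t : ℝ, 0 < t ∧ ∃ r s : ℚ, (r : ℝ) = t * ν.1 ∧ (s : ℝ) = t * ν.2 := by
  have hn : 0 < ν.1 ^ 2 + ν.2 ^ 2 := by
    have : ν.1 ≠ 0 ∨ ν.2 ≠ 0 := by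
      contrapose! hν
      exact Prod.ext hν.1 hν.2
    rcases this with h | h <;> positivity
  -- `(-d₂, d₁)` and `ν` are both orthogonal to `(d₁, d₂)`, so `(-d₂, d₁) = t₀ • ν`
  -- with `t₀ = ⟪(-d₂, d₁), ν⟫ / ‖ν‖²`
  set t₀ := ((d₁ : ℝ) * ν.2 - d₂ * ν.1) / (ν.1 ^ 2 + ν.2 ^ 2)
  have ht₀ : t₀ * (ν.1 ^ 2 + ν.2 ^ 2) = d₁ * ν.2 - d₂ * ν.1 := div_mul_cancel₀ _ hn.ne'
  have h₁ : ((-d₂ : ℚ) : ℝ) = t₀ * ν.1 := by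
    refine mul_right_cancel₀ hn.ne' ?_
    push_cast
    linear_combination (-ν.2) * horth - ν.1 * ht₀
  have h₂ : ((d₁ : ℚ) : ℝ) = t₀ * ν.2 := by
    refine mul_right_cancel₀ hn.ne' ?_
    linear_combination ν.1 * horth - ν.2 * ht₀
  have ht₀_ne : t₀ ≠ 0 := by
    rintro h0
    rw [h0, zero_mul] at h₁ h₂
    exact hd.elim (fun h => h (by exact_mod_cast h₂)) fun h => h (by simpa using h₁)
  rcases lt_or_gt_of_ne ht₀_ne with hneg | hpos
  · exact ⟨-t₀, neg_pos.2 hneg, d₂, -d₁, by push_cast at h₁ ⊢; linarith, by push_cast; linarith⟩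
  · exact ⟨t₀, hpos, -d₂, d₁, h₁, h₂⟩

theorem exists_isCoprime_pos_smul_eq_of_rat_points {ν : ℝ × ℝ} (hν : ν ≠ 0) {c : ℝ}
    {e₁ e₂ f₁ f₂ : ℚ} (hne : ((e₁ : ℝ), (e₂ : ℝ)) ≠ ((f₁ : ℝ), (f₂ : ℝ)))
    (he : (e₁ : ℝ) * ν.1 + e₂ * ν.2 = c) (hf : (f₁ : ℝ) * ν.1 + f₂ * ν.2 = c) :
    ∃ u w : ℤ, IsCoprime u w ∧ ∃ t : ℝ, 0 < t ∧ (u : ℝ) = t * ν.1 ∧ (w : ℝ) = t * ν.2 := by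
  have hd : f₁ - e₁ ≠ 0 ∨ f₂ - e₂ ≠ 0 := by
    contrapose! hne
    rw [sub_eq_zero.1 hne.1, sub_eq_zero.1 hne.2]
  obtain ⟨t, ht, r, s, hr, hs⟩ :=
    exists_pos_smul_eq_rat_of_orthogonal hν hd (by push_cast; linear_combination hf - he)
  have hrs : r ≠ 0 ∨ s ≠ 0 := by
    contrapose! hν
    rw [hν.1, Rat.cast_zero, zero_eq_mul] at hr
    rw [hν.2, Rat.cast_zero, zero_eq_mul] at hs
    exact Prod.ext (hr.resolve_left ht.ne') (hs.resolve_left ht.ne')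
  obtain ⟨κ, hκ, u, w, huw, hu, hw⟩ := Rat.exists_pos_mul_eq_isCoprime hrs
  refine ⟨u, w, huw, κ * t, by positivity, ?_, ?_⟩
  · rw [← Rat.cast_intCast, hu, Rat.cast_mul, hr, mul_assoc]
  · rw [← Rat.cast_intCast, hw, Rat.cast_mul, hs, mul_assoc]

theorem Matrix.SpecialLinearGroup.exists_row_zero_eq {R : Type*} [CommRing R] {u w : R}
    (h : IsCoprime u w) : ∃ A : Matrix.SpecialLinearGroup (Fin 2) R, A.1 0 0 = u ∧ A.1 0 1 = w := by
  obtain ⟨a, b, hab⟩ := h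
  exact ⟨⟨!![u, w; -b, a], by rw [Matrix.det_fin_two_of]; linear_combination hab⟩, rfl, rfl⟩

theorem matAct_smul_add_fst (A : Matrix.SpecialLinearGroup (Fin 2) ℤ) (p : ℝ) (z : ℝ × ℝ)
    (m n : ℝ) :
    (matAct A (p • z) + (m, n)).1 = p * ((A.1 0 0 : ℝ) * z.1 + (A.1 0 1 : ℝ) * z.2) + m := by
  simp only [matAct, Prod.fst_add, Prod.smul_fst, Prod.smul_snd, smul_eq_mul]
  ring

section LevelSets

variable {α : Type*} {T : α → ℝ × ℝ} {f : α → ℝ} {κ c : ℝ}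

theorem image_subset_fst_nonpos (hκ : 0 < κ) (hT : ∀ z, (T z).1 = κ * (f z - c)) {ρ : Set α}
    (hρ : ∀ z ∈ ρ, f z ≤ c) : T '' ρ ⊆ {z | z.1 ≤ 0} := by
  rintro _ ⟨z, hz, rfl⟩
  rw [Set.mem_ofPred_eq, hT]
  exact mul_nonpos_of_nonneg_of_nonpos hκ.le (sub_nonpos.2 (hρ z hz))

theorem image_inter_fst_eq_zero (hκ : 0 < κ) (hT : ∀ z, (T z).1 = κ * (f z - c)) (ρ : Set α) :
    T '' ρ ∩ {z | z.1 = 0} = T '' (ρ ∩ {z | f z = c}) := by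
  rw [← Set.image_inter_preimage]
  congr! 2
  ext z
  simp [hT, hκ.ne', sub_eq_zero]

end LevelSets

theorem side_of_rational_polygon_to_vertical_general
    (V : Finset (ℝ × ℝ)) (hV : ∀ v ∈ V, ∃ a b : ℚ, v = ((a : ℝ), (b : ℝ)))
    (ρ : Set (ℝ × ℝ)) (hρ : ρ = convexHull ℝ (V : Set (ℝ × ℝ)))
    (S : Set (ℝ × ℝ)) (ν : ℝ × ℝ) (hν : ν ≠ 0) (c : ℝ)
    (hsupp : ρ ⊆ {z : ℝ × ℝ | z.1 * ν.1 + z.2 * ν.2 ≤ c})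
    (hS : S = ρ ∩ {z : ℝ × ℝ | z.1 * ν.1 + z.2 * ν.2 = c})
    (hSseg : ∃ x ∈ S, ∃ y ∈ S, x ≠ y) :
    ∃ (A : Matrix.SpecialLinearGroup (Fin 2) ℤ) (m n : ℤ) (p : ℕ), 0 < p ∧
      (fun z => matAct A ((p : ℝ) • z) + ((m : ℝ), (n : ℝ))) '' ρ
          ⊆ {z : ℝ × ℝ | z.1 ≤ 0} ∧
      ((fun z => matAct A ((p : ℝ) • z) + ((m : ℝ), (n : ℝ))) '' ρ)
          ∩ {z : ℝ × ℝ | z.1 = 0}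
        = (fun z => matAct A ((p : ℝ) • z) + ((m : ℝ), (n : ℝ))) '' S := by
  subst hρ hS
  set ℓ : ℝ × ℝ →L[ℝ] ℝ :=
    ν.1 • ContinuousLinearMap.fst ℝ ℝ ℝ + ν.2 • ContinuousLinearMap.snd ℝ ℝ ℝ
  have hℓ : ∀ z, ℓ z = z.1 * ν.1 + z.2 * ν.2 := fun z => by simp [ℓ, mul_comm]
  have hside : (convexHull ℝ ↑V ∩ {z | ℓ z = c}).Nontrivial := by
    simp_rw [hℓ]
    exact hSseg
  obtain ⟨_, ⟨hqV, hq⟩, _, ⟨hq'V, hq'⟩, hqq'⟩ :=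
    V.finite_toSet.nontrivial_inter_of_convexHull_inter ℓ (fun z hz => hℓ z ▸ hsupp hz) hside
  obtain ⟨e₁, e₂, rfl⟩ := hV _ hqV
  obtain ⟨f₁, f₂, rfl⟩ := hV _ hq'V
  simp only [Set.mem_ofPred_eq, hℓ] at hq hq'
  obtain ⟨u, w, huw, t, ht, hu, hw⟩ := exists_isCoprime_pos_smul_eq_of_rat_points hν hqq' hq hq'
  obtain ⟨A, hA₀, hA₁⟩ := Matrix.SpecialLinearGroup.exists_row_zero_eq huw
  set c' : ℚ := u * e₁ + w * e₂
  have hnum : (c'.num : ℝ) = c'.den * (t * c) := by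
    rw [← hq, ← Rat.cast_intCast, ← Rat.den_mul_eq_num]
    push_cast [c', hu, hw]
    ring
  have hfst : ∀ z, (matAct A ((c'.den : ℝ) • z) + (((-c'.num : ℤ) : ℝ), ((0 : ℤ) : ℝ))).1
      = c'.den * t * (z.1 * ν.1 + z.2 * ν.2 - c) := fun z => by
    rw [matAct_smul_add_fst, hA₀, hA₁, hu, hw, Int.cast_neg, hnum]
    ring
  have hκ : (0 : ℝ) < c'.den * t := by positivity
  exact ⟨A, -c'.num, 0, c'.den, c'.den_pos,
    image_subset_fst_nonpos hκ hfst hsupp, image_inter_fst_eq_zero hκ hfst _⟩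

/-- Let `ρ` be a polygon with rational vertices (the convex hull of a finite set of
rational points, not contained in a line) and let `S` be a side of `ρ` (a one-dimensional
face, cut out by a supporting line with outward normal `ν`).  Then there are
`A ∈ SL(2,ℤ)`, integers `m, n` and a positive integer `p` such that the image
`D = A·(p·ρ) + (m,n)` lies in the half-plane `{x ≤ 0}` and meets the line `{x = 0}`
exactly in the corresponding side `A·(p·S) + (m,n)`. -/
theorem side_of_rational_polygon_to_vertical
    (V : Finset (ℝ × ℝ)) (hV : ∀ v ∈ V, ∃ a b : ℚ, v = ((a : ℝ), (b : ℝ)))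
    (ρ : Set (ℝ × ℝ)) (hρ : ρ = convexHull ℝ (V : Set (ℝ × ℝ)))
    (hnd : (interior ρ).Nonempty)
    (S : Set (ℝ × ℝ)) (ν : ℝ × ℝ) (hν : ν ≠ 0) (c : ℝ)
    (hsupp : ρ ⊆ {z : ℝ × ℝ | z.1 * ν.1 + z.2 * ν.2 ≤ c})
    (hS : S = ρ ∩ {z : ℝ × ℝ | z.1 * ν.1 + z.2 * ν.2 = c})
    (hSseg : ∃ x ∈ S, ∃ y ∈ S, x ≠ y) :
    ∃ (A : Matrix.SpecialLinearGroup (Fin 2) ℤ) (m n : ℤ) (p : ℕ), 0 < p ∧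
      (fun z => matAct A ((p : ℝ) • z) + ((m : ℝ), (n : ℝ))) '' ρ
          ⊆ {z : ℝ × ℝ | z.1 ≤ 0} ∧
      ((fun z => matAct A ((p : ℝ) • z) + ((m : ℝ), (n : ℝ))) '' ρ)
          ∩ {z : ℝ × ℝ | z.1 = 0}
        = (fun z => matAct A ((p : ℝ) • z) + ((m : ℝ), (n : ℝ))) '' S :=
  side_of_rational_polygon_to_vertical_general V hV ρ hρ S ν hν c hsupp hS hSseg
end

section
/- Let (X,μ) be a separable metric probability space, T : X → X a measurable map preserving μ with μ ergodic, and φ : X → ℝ integrable with ∫ φ dμ = 0. Then there exists a set X̃ ⊆ X of full μ-measure such that for every x ∈ X̃ there is a strictly increasing sequence of positive integers (n_i) with T^{n_i}(x) → x and |∑_{j=0}^{n_i−1} φ(T^j(x))| → 0 as i → ∞. -/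
/-!
By Hopf's maximal ergodic inequality, the Birkhoff sums of a function with negative mean are a.e.
bounded above under an ergodic map; applied to `ψ - c` for `c` slightly above and below `∫ ψ`,
this gives `S_n ψ = n ∫ ψ + o(n)` along a.e. orbit. A counting argument of Atkinson then shows
that a.e. point of a measurable set `A` returns to `A` with `|S_n φ| < ε`. Covering the separable
space by countably many small balls, for a.e. `x` the point `(x, 0)` is recurrent for the skew
product `(x, t) ↦ (T x, t + φ x)`, and in a T1 space a recurrent point comes back infinitely
often, which produces the sequence `n_i`.
-/

open Filter Topology MeasureTheory

section MaximalInequality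

variable {X : Type*} {T : X → X} {ψ : X → ℝ}

theorem partialSups_birkhoffSum_nonneg (N : ℕ) (x : X) :
    0 ≤ partialSups (birkhoffSum T ψ) N x := by
  simpa using le_partialSups_of_le (birkhoffSum T ψ) (Nat.zero_le N) x

theorem partialSups_birkhoffSum_le_max (N : ℕ) (x : X) :
    partialSups (birkhoffSum T ψ) N x ≤ max 0 (ψ x + partialSups (birkhoffSum T ψ) N (T x)) := by
  rw [Pi.partialSups_apply]
  refine partialSups_le _ _ _ fun n hn => ?_
  cases n with
  | zero => simp
  | succ n =>
    rw [birkhoffSum_succ']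
    have := le_partialSups_of_le (birkhoffSum T ψ) (Nat.le_of_succ_le hn) (T x)
    exact le_max_of_le_right (by linarith)

variable [MeasurableSpace X] {μ : Measure X}

theorem measurable_birkhoffSum (hT : Measurable T) (hψ : Measurable ψ) (n : ℕ) :
    Measurable (birkhoffSum T ψ n) :=
  Finset.measurable_sum _ fun j _ => hψ.comp (hT.iterate j)

theorem MeasureTheory.MeasurePreserving.integrable_birkhoffSum (hT : MeasurePreserving T μ μ)
    (hψ : Integrable ψ μ) (n : ℕ) : Integrable (birkhoffSum T ψ n) μ :=
  integrable_finsetSum _ fun j _ => (hT.iterate j).integrable_comp_of_integrable hψ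

theorem measurable_partialSups_birkhoffSum (hT : Measurable T) (hψ : Measurable ψ) (N : ℕ) :
    Measurable (partialSups (birkhoffSum T ψ) N) := by
  induction N with
  | zero => exact measurable_birkhoffSum hT hψ 0
  | succ N ih =>
    rw [← Order.succ_eq_add_one, partialSups_succ]
    exact ih.sup (measurable_birkhoffSum hT hψ _)

theorem MeasureTheory.MeasurePreserving.integrable_partialSups_birkhoffSum
    (hT : MeasurePreserving T μ μ) (hψ : Integrable ψ μ) (N : ℕ) :
    Integrable (partialSups (birkhoffSum T ψ) N) μ := by
  induction N with
  | zero => exact hT.integrable_birkhoffSum hψ 0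
  | succ N ih =>
    rw [← Order.succ_eq_add_one, partialSups_succ]
    exact ih.sup (hT.integrable_birkhoffSum hψ _)

/-- Garsia's proof of the maximal ergodic inequality: `M - M ∘ T ≤ 𝟙_{M > 0} ψ` pointwise for
`M = max (S₀ ψ, …, S_N ψ)`, and the left side has integral zero. -/
theorem MeasureTheory.MeasurePreserving.setIntegral_partialSups_birkhoffSum_pos_nonneg
    (hT : MeasurePreserving T μ μ) (hψm : Measurable ψ) (hψ : Integrable ψ μ) (N : ℕ) :
    0 ≤ ∫ x in {x | 0 < partialSups (birkhoffSum T ψ) N x}, ψ x ∂μ := by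
  set M := partialSups (birkhoffSum T ψ) N
  have hMm : Measurable M := measurable_partialSups_birkhoffSum hT.measurable hψm N
  have hMi : Integrable M μ := hT.integrable_partialSups_birkhoffSum hψ N
  have hMTi : Integrable (fun x => M (T x)) μ := hT.integrable_comp_of_integrable hMi
  have hpos : MeasurableSet {x | 0 < M x} := measurableSet_lt measurable_const hMm
  have hpt : ∀ x, M x - M (T x) ≤ {x | 0 < M x}.indicator ψ x := by
    intro x
    by_cases hx : 0 < M x
    · rw [Set.indicator_of_mem (show x ∈ {x | 0 < M x} from hx)]
      rcases le_max_iff.1 (partialSups_birkhoffSum_le_max N x) with h | h <;> linarith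
    · rw [Set.indicator_of_notMem (show x ∉ {x | 0 < M x} from hx)]
      linarith [partialSups_birkhoffSum_nonneg (T := T) (ψ := ψ) N (T x)]
  calc 0 = ∫ x, M x - M (T x) ∂μ := by
        rw [integral_sub hMi hMTi, ← integral_map hT.measurable.aemeasurable
          hMm.aestronglyMeasurable, hT.map_eq, sub_self]
    _ ≤ ∫ x, {x | 0 < M x}.indicator ψ x ∂μ :=
        integral_mono (hMi.sub hMTi) (hψ.indicator hpos) hpt
    _ = ∫ x in {x | 0 < M x}, ψ x ∂μ := integral_indicator hpos

theorem MeasureTheory.MeasurePreserving.setIntegral_iUnion_partialSups_birkhoffSum_pos_nonneg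
    (hT : MeasurePreserving T μ μ) (hψm : Measurable ψ) (hψ : Integrable ψ μ) :
    0 ≤ ∫ x in ⋃ N, {x | 0 < partialSups (birkhoffSum T ψ) N x}, ψ x ∂μ :=
  ge_of_tendsto
    (tendsto_setIntegral_of_monotone
      (fun N => measurableSet_lt measurable_const
        (measurable_partialSups_birkhoffSum hT.measurable hψm N))
      (fun _ _ hMN _ hx => hx.trans_le ((partialSups (birkhoffSum T ψ)).monotone hMN _))
      hψ.integrableOn)
    (Eventually.of_forall (hT.setIntegral_partialSups_birkhoffSum_pos_nonneg hψm hψ))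

end MaximalInequality

section BirkhoffSumBounds

variable {X : Type*} {T : X → X} {ψ : X → ℝ}

theorem bddAbove_range_birkhoffSum_apply_iff (x : X) :
    BddAbove (Set.range fun n => birkhoffSum T ψ n (T x)) ↔
      BddAbove (Set.range fun n => birkhoffSum T ψ n x) := by
  simp only [bddAbove_def, Set.forall_mem_range]
  constructor
  · rintro ⟨C, hC⟩
    refine ⟨max 0 (ψ x + C), fun n => ?_⟩
    cases n with
    | zero => simp
    | succ n => rw [birkhoffSum_succ']; exact le_max_of_le_right (by linarith [hC n])
  · rintro ⟨C, hC⟩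
    exact ⟨C - ψ x, fun n => by linarith [hC (n + 1), birkhoffSum_succ' T ψ n x]⟩

variable [MeasurableSpace X] {μ : Measure X}

/-- The set where the Birkhoff sums are unbounded above is invariant, hence null or conull; it is
contained in `⋃ N, {max (S₀ ψ, …, S_N ψ) > 0}`, so conull would contradict the maximal
inequality. -/
theorem Ergodic.ae_bddAbove_birkhoffSum [IsFiniteMeasure μ] (hT : Ergodic T μ)
    (hψm : Measurable ψ) (hψ : Integrable ψ μ) (hneg : ∫ x, ψ x ∂μ < 0) :
    ∀ᵐ x ∂μ, BddAbove (Set.range fun n => birkhoffSum T ψ n x) := by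
  set E := {x | BddAbove (Set.range fun n => birkhoffSum T ψ n x)}
  have hE : MeasurableSet E :=
    measurableSet_bddAbove_range (measurable_birkhoffSum hT.measurable hψm)
  have hTE : T ⁻¹' E = E := Set.ext bddAbove_range_birkhoffSum_apply_iff
  rcases hT.ae_empty_or_univ hE hTE with hE0 | hE1
  · set U := ⋃ N, {x | 0 < partialSups (birkhoffSum T ψ) N x}
    have hEU : Eᶜ ⊆ U := fun x hx => by
      obtain ⟨_, ⟨n, rfl⟩, hn⟩ := not_bddAbove_iff.1 hx 0
      exact Set.mem_iUnion.2 ⟨n, hn.trans_le (le_partialSups (birkhoffSum T ψ) n x)⟩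
    have hU : U =ᵐ[μ] Set.univ := by
      rw [ae_eq_univ]
      exact measure_mono_null (Set.compl_subset_comm.1 hEU) (ae_eq_empty.1 hE0)
    have := hT.toMeasurePreserving.setIntegral_iUnion_partialSups_birkhoffSum_pos_nonneg hψm hψ
    rw [setIntegral_congr_set hU, setIntegral_univ] at this
    exact absurd this (not_le.2 hneg)
  · exact hE1.mem_iff.mono fun x hx => hx.2 trivial

theorem Ergodic.ae_exists_abs_birkhoffSum_sub_le [IsProbabilityMeasure μ] (hT : Ergodic T μ)
    (hψm : Measurable ψ) (hψ : Integrable ψ μ) {δ : ℝ} (hδ : 0 < δ) :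
    ∀ᵐ x ∂μ, ∃ C, ∀ n : ℕ, |birkhoffSum T ψ n x - n * ∫ y, ψ y ∂μ| ≤ n * δ + C := by
  set I := ∫ y, ψ y ∂μ
  have hup := hT.ae_bddAbove_birkhoffSum (ψ := fun x => ψ x - (I + δ))
    (hψm.sub measurable_const) (hψ.sub (integrable_const _)) (by
      rw [integral_sub hψ (integrable_const _), integral_const, probReal_univ, one_smul]
      linarith)
  have hlow := hT.ae_bddAbove_birkhoffSum (ψ := fun x => (I - δ) - ψ x)
    (measurable_const.sub hψm) ((integrable_const _).sub hψ) (by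
      rw [integral_sub (integrable_const _) hψ, integral_const, probReal_univ, one_smul]
      linarith)
  filter_upwards [hup, hlow] with x ⟨C₁, hC₁⟩ ⟨C₂, hC₂⟩
  refine ⟨max C₁ C₂, fun n => abs_le.2 ⟨?_, ?_⟩⟩
  · have := hC₂ (Set.mem_range_self n)
    simp only [birkhoffSum, Finset.sum_sub_distrib, Finset.sum_const, Finset.card_range,
      nsmul_eq_mul] at this ⊢
    linarith [le_max_right C₁ C₂]
  · have := hC₁ (Set.mem_range_self n)
    simp only [birkhoffSum, Finset.sum_sub_distrib, Finset.sum_const, Finset.card_range,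
      nsmul_eq_mul] at this ⊢
    linarith [le_max_left C₁ C₂]

end BirkhoffSumBounds

theorem Finset.card_le_floor_of_le_abs_sub {ι : Type*} (s : Finset ι) (f : ι → ℝ) {ε R : ℝ}
    (hε : 0 < ε) (hR : ∀ i ∈ s, |f i| ≤ R) (hsep : ∀ i ∈ s, ∀ j ∈ s, i ≠ j → ε ≤ |f i - f j|) :
    s.card ≤ ⌊2 * R / ε⌋₊ + 1 := by
  set g : ι → ℕ := fun i => ⌊(f i + R) / ε⌋₊
  have hg : ∀ i ∈ s, 0 ≤ (f i + R) / ε ∧ (f i + R) / ε ≤ 2 * R / ε := fun i hi => by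
    have := abs_le.1 (hR i hi)
    exact ⟨div_nonneg (by linarith) hε.le, div_le_div_of_nonneg_right (by linarith) hε.le⟩
  have hmaps : Set.MapsTo g s (Finset.range (⌊2 * R / ε⌋₊ + 1)) := fun i hi =>
    Finset.mem_range.2 (Nat.lt_succ_of_le (Nat.floor_le_floor (hg i hi).2))
  have hinj : Set.InjOn g s := by
    intro i hi j hj hij
    by_contra hne
    have h₁ := Nat.floor_le (hg i hi).1
    have h₂ := Nat.floor_le (hg j hj).1
    have h₃ := Nat.lt_floor_add_one ((f i + R) / ε)
    have h₄ := Nat.lt_floor_add_one ((f j + R) / ε)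
    have hij' : (g i : ℝ) = g j := congrArg Nat.cast hij
    have : |(f i + R) / ε - (f j + R) / ε| < 1 := abs_sub_lt_iff.2 ⟨by linarith, by linarith⟩
    rw [← sub_div, abs_div, abs_of_pos hε, div_lt_one hε, add_sub_add_right_eq_sub] at this
    exact (hsep i hi j hj hne).not_gt this
  simpa using Finset.card_le_card_of_injOn g hmaps hinj

section Recurrence

variable {X : Type*} {T : X → X} {φ : X → ℝ}

theorem birkhoffSum_indicator_one_le {B : Set X} {ε R : ℝ} (hε : 0 < ε)
    (hB : ∀ y ∈ B, ∀ n, 0 < n → T^[n] y ∈ B → ε ≤ |birkhoffSum T φ n y|) (x : X) (N : ℕ)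
    (hR : ∀ j < N, |birkhoffSum T φ j x| ≤ R) :
    birkhoffSum T (B.indicator (1 : X → ℝ)) N x ≤ ⌊2 * R / ε⌋₊ + 1 := by
  classical
  set visits := (Finset.range N).filter fun j => T^[j] x ∈ B
  have hsep : ∀ i ∈ visits, ∀ j ∈ visits, i < j →
      ε ≤ |birkhoffSum T φ i x - birkhoffSum T φ j x| := by
    intro i hi j hj hij
    obtain ⟨k, rfl⟩ := Nat.exists_eq_add_of_lt hij
    have hreturn : T^[k + 1] (T^[i] x) = T^[i + k + 1] x := by
      rw [← Function.iterate_add_apply, add_comm, add_assoc]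
    rw [add_assoc, birkhoffSum_add, abs_sub_comm, add_sub_cancel_left]
    exact hB _ (Finset.mem_filter.1 hi).2 _ k.succ_pos
      (hreturn ▸ (Finset.mem_filter.1 hj).2)
  have hcard : birkhoffSum T (B.indicator (1 : X → ℝ)) N x = visits.card := by
    simp only [visits, Finset.natCast_card_filter, birkhoffSum, Set.indicator_apply, Pi.one_apply]
  rw [hcard]
  exact_mod_cast Finset.card_le_floor_of_le_abs_sub visits _ hε
    (fun j hj => hR j (Finset.mem_range.1 (Finset.mem_filter.1 hj).1)) fun i hi j hj hne =>
      hne.lt_or_gt.elim (hsep i hi j hj) fun h => abs_sub_comm (birkhoffSum T φ j x) _ ▸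
        hsep j hj i hi h

variable [MeasurableSpace X] {μ : Measure X}

/-- Atkinson's counting argument: along a typical orbit the visits to `B` before time `N` number
about `N μ(B)`, while the Birkhoff sums of `φ` at these visits are `ε`-separated and only of size
`o(N)`. -/
theorem Ergodic.measure_eq_zero_of_forall_return_le_abs_birkhoffSum [IsProbabilityMeasure μ]
    (hT : Ergodic T μ) (hφm : Measurable φ) (hφ : Integrable φ μ) (hmean : ∫ x, φ x ∂μ = 0)
    {B : Set X} (hBm : MeasurableSet B) {ε : ℝ} (hε : 0 < ε)
    (hB : ∀ y ∈ B, ∀ n, 0 < n → T^[n] y ∈ B → ε ≤ |birkhoffSum T φ n y|) : μ B = 0 := by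
  by_contra hB0
  set β := μ.real B with hβ_def
  have hβ : 0 < β := ENNReal.toReal_pos hB0 (measure_ne_top μ B)
  set δ := β / (2 * (1 + 2 / ε))
  have hδ : 0 < δ := by positivity
  have hδβ : δ + 2 * δ / ε = β / 2 := by simp only [δ]; field_simp
  clear_value δ
  obtain ⟨x, ⟨C₁, hC₁⟩, ⟨C₂, hC₂⟩⟩ :=
    ((hT.ae_exists_abs_birkhoffSum_sub_le (ψ := B.indicator 1) (measurable_one.indicator hBm)
      ((integrable_const 1).indicator hBm) hδ).and
      (hT.ae_exists_abs_birkhoffSum_sub_le hφm hφ hδ)).exists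
  rw [integral_indicator_one hBm, ← hβ_def] at hC₁
  simp only [hmean, mul_zero, sub_zero] at hC₂
  have hC₂0 : 0 ≤ C₂ := by simpa using hC₂ 0
  have hN : ∀ N : ℕ, N * (β / 2) ≤ C₁ + 2 * C₂ / ε + 1 := by
    intro N
    have hvisits := birkhoffSum_indicator_one_le hε hB x N (R := N * δ + C₂) fun j hj =>
      (hC₂ j).trans (by gcongr)
    have hfloor := Nat.floor_le (a := 2 * (N * δ + C₂) / ε) (by positivity)
    have hlow := (abs_le.1 (hC₁ N)).1
    have hβ2 : (N : ℝ) * (β / 2) = N * β - N * (δ + 2 * δ / ε) := by rw [hδβ]; ring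
    have hR : 2 * (N * δ + C₂) / ε = N * (2 * δ / ε) + 2 * C₂ / ε := by ring
    linarith
  obtain ⟨N, hN'⟩ := exists_nat_gt ((C₁ + 2 * C₂ / ε + 1) / (β / 2))
  rw [div_lt_iff₀ (by positivity)] at hN'
  exact (hN N).not_gt hN'

end Recurrence

theorem Ergodic.ae_exists_iterate_mem_abs_birkhoffSum_lt {X : Type*} [MeasurableSpace X]
    {μ : Measure X} [IsProbabilityMeasure μ] {T : X → X} {φ : X → ℝ} (hT : Ergodic T μ)
    (hφm : Measurable φ) (hφ : Integrable φ μ) (hmean : ∫ x, φ x ∂μ = 0) {A : Set X}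
    (hA : MeasurableSet A) {ε : ℝ} (hε : 0 < ε) :
    ∀ᵐ x ∂μ, x ∈ A → ∃ n, 0 < n ∧ T^[n] x ∈ A ∧ |birkhoffSum T φ n x| < ε := by
  set B := A ∩ {x | ∀ n, 0 < n → T^[n] x ∈ A → ε ≤ |birkhoffSum T φ n x|}
  have hBm : MeasurableSet B := by
    refine hA.inter ?_
    rw [Set.ofPred_forall]
    exact .iInter fun n => (MeasurableSet.const _).imp ((hT.measurable.iterate n hA).imp
      (measurableSet_le measurable_const (measurable_birkhoffSum hT.measurable hφm n).abs))
  have hB0 : μ B = 0 := hT.measure_eq_zero_of_forall_return_le_abs_birkhoffSum hφm hφ hmean hBm hε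
    fun y hy n hn hnB => hy.2 n hn hnB.1
  filter_upwards [measure_eq_zero_iff_ae_notMem.1 hB0] with x hxB hxA
  by_contra! h
  exact hxB ⟨hxA, h⟩

theorem Ergodic.ae_exists_dist_iterate_lt_abs_birkhoffSum_lt {X : Type*} [PseudoMetricSpace X]
    [TopologicalSpace.SeparableSpace X] [MeasurableSpace X] [OpensMeasurableSpace X]
    {μ : Measure X} [IsProbabilityMeasure μ] {T : X → X} {φ : X → ℝ} (hT : Ergodic T μ)
    (hφm : Measurable φ) (hφ : Integrable φ μ) (hmean : ∫ x, φ x ∂μ = 0) {ε : ℝ} (hε : 0 < ε) :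
    ∀ᵐ x ∂μ, ∃ n, 0 < n ∧ dist (T^[n] x) x < ε ∧ |birkhoffSum T φ n x| < ε := by
  obtain ⟨s, hs, hsd⟩ := TopologicalSpace.exists_countable_dense X
  have hball : ∀ᵐ x ∂μ, ∀ y ∈ s, x ∈ Metric.ball y (ε / 2) →
      ∃ n, 0 < n ∧ T^[n] x ∈ Metric.ball y (ε / 2) ∧ |birkhoffSum T φ n x| < ε :=
    (ae_ball_iff hs).2 fun y _ =>
      hT.ae_exists_iterate_mem_abs_birkhoffSum_lt hφm hφ hmean Metric.isOpen_ball.measurableSet hε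
  filter_upwards [hball] with x hx
  obtain ⟨y, hy, hxy⟩ := hsd.exists_dist_lt x (half_pos hε)
  obtain ⟨n, hn, hny, hsum⟩ := hx y hy (Metric.mem_ball.2 hxy)
  refine ⟨n, hn, ?_, hsum⟩
  calc dist (T^[n] x) x ≤ dist (T^[n] x) y + dist x y := dist_triangle_right _ _ _
    _ < ε / 2 + ε / 2 := add_lt_add (Metric.mem_ball.1 hny) hxy
    _ = ε := add_halves ε

/-- Either `p` is periodic, or a neighbourhood of `p` can exclude any finitely many earlier
iterates, forcing later returns. -/
theorem Function.mapClusterPt_iterate_of_forall_exists_iterate_mem {Y : Type*}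
    [TopologicalSpace Y] [T1Space Y] {f : Y → Y} {p : Y}
    (h : ∀ U ∈ 𝓝 p, ∃ n, 0 < n ∧ f^[n] p ∈ U) : MapClusterPt p atTop fun n => f^[n] p := by
  refine mapClusterPt_iff_frequently.2 fun U hU => frequently_atTop.2 fun N => ?_
  by_cases hper : ∃ m, 0 < m ∧ IsPeriodicPt f m p
  · obtain ⟨m, hm, hmp⟩ := hper
    exact ⟨m * (N + 1), Nat.le_mul_of_pos_left _ hm |>.trans' N.le_succ,
      by rw [(hmp.mul_const (N + 1)).eq]; exact mem_of_mem_nhds hU⟩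
  · push Not at hper
    set F := (fun n => f^[n] p) '' Set.Ioo 0 N
    have hpF : p ∉ F := fun ⟨n, hn, hnp⟩ => hper n hn.1 hnp
    obtain ⟨n, hn, hnU, hnF⟩ :=
      h _ (inter_mem hU (((Set.finite_Ioo 0 N).image _).isClosed.compl_mem_nhds hpF))
    exact ⟨n, not_lt.1 fun hnN => hnF ⟨n, ⟨hn, hnN⟩, rfl⟩, hnU⟩

section SkewProduct

variable {X G : Type*} [AddCommMonoid G]

def skewProduct (T : X → X) (φ : X → G) (p : X × G) : X × G := (T p.1, p.2 + φ p.1)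

theorem skewProduct_iterate (T : X → X) (φ : X → G) (n : ℕ) (x : X) (t : G) :
    (skewProduct T φ)^[n] (x, t) = (T^[n] x, t + birkhoffSum T φ n x) := by
  induction n with
  | zero => simp
  | succ n ih =>
    rw [Function.iterate_succ_apply', ih, Function.iterate_succ_apply', birkhoffSum_succ,
      ← add_assoc]
    rfl

end SkewProduct

theorem Ergodic.ae_mapClusterPt_skewProduct_iterate {X : Type*} [MetricSpace X]
    [TopologicalSpace.SeparableSpace X] [MeasurableSpace X] [OpensMeasurableSpace X]
    {μ : Measure X} [IsProbabilityMeasure μ] {T : X → X} {φ : X → ℝ} (hT : Ergodic T μ)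
    (hφ : Integrable φ μ) (hmean : ∫ x, φ x ∂μ = 0) :
    ∀ᵐ x ∂μ, MapClusterPt (x, 0) atTop fun n => (skewProduct T φ)^[n] (x, 0) := by
  set φ' := hφ.1.mk φ
  have hφφ' : φ =ᵐ[μ] φ' := hφ.1.ae_eq_mk
  have hsum : ∀ᵐ x ∂μ, ∀ n, birkhoffSum T φ n x = birkhoffSum T φ' n x :=
    ae_all_iff.2 fun n => hT.quasiMeasurePreserving.birkhoffSum_ae_eq_of_ae_eq hφφ' n
  have hret : ∀ᵐ x ∂μ, ∀ k : ℕ, ∃ n, 0 < n ∧ dist (T^[n] x) x < 1 / (k + 1) ∧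
      |birkhoffSum T φ' n x| < 1 / (k + 1) :=
    ae_all_iff.2 fun k => hT.ae_exists_dist_iterate_lt_abs_birkhoffSum_lt
      hφ.1.stronglyMeasurable_mk.measurable (hφ.congr hφφ')
      (by rw [← integral_congr_ae hφφ', hmean]) Nat.one_div_pos_of_nat
  filter_upwards [hsum, hret] with x hsum hret
  refine Function.mapClusterPt_iterate_of_forall_exists_iterate_mem fun U hU => ?_
  obtain ⟨r, hr, hrU⟩ := Metric.mem_nhds_iff.1 hU
  obtain ⟨k, hk⟩ := exists_nat_one_div_lt hr
  obtain ⟨n, hn, hdist, habs⟩ := hret k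
  refine ⟨n, hn, hrU ?_⟩
  rw [skewProduct_iterate, zero_add, hsum n, Metric.mem_ball, Prod.dist_eq, Real.dist_eq, sub_zero]
  exact max_lt (hdist.trans hk) (habs.trans hk)

/-- **Atkinson's Lemma.** Let `(X, μ)` be a separable metric probability space,
`T : X → X` ergodic with respect to `μ`, and `φ : X → ℝ` integrable with `∫ φ dμ = 0`.
Then there is a full-measure set `X̃` such that every `x ∈ X̃` admits a strictly
increasing sequence of positive integers `n i` with `T^[n i] x → x` and
`|∑_{j<n i} φ(T^j x)| → 0`. -/
theorem atkinson_lemma {X : Type*} [MetricSpace X] [TopologicalSpace.SeparableSpace X]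
    [MeasurableSpace X] [BorelSpace X]
    (μ : Measure X) [IsProbabilityMeasure μ]
    (T : X → X) (hT : Ergodic T μ)
    (φ : X → ℝ) (hφ : Integrable φ μ) (hmean : ∫ x, φ x ∂μ = 0) :
    ∃ Xt : Set X, μ Xtᶜ = 0 ∧ ∀ x ∈ Xt, ∃ n : ℕ → ℕ, StrictMono n ∧ (∀ i, 0 < n i) ∧
      Tendsto (fun i => T^[n i] x) atTop (nhds x) ∧
      Tendsto (fun i => |∑ j ∈ Finset.range (n i), φ (T^[j] x)|) atTop (nhds 0) := by
  refine ⟨{x | MapClusterPt (x, 0) atTop fun n => (skewProduct T φ)^[n] (x, 0)},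
    ae_iff.1 (hT.ae_mapClusterPt_skewProduct_iterate hφ hmean), fun x hx => ?_⟩
  obtain ⟨m, hm, hlim⟩ := MapClusterPt.tendsto_subseq hx
  have hlim' := hlim.comp (tendsto_add_atTop_nat 1)
  simp only [Function.comp_def, skewProduct_iterate, zero_add] at hlim'
  refine ⟨fun i => m (i + 1), fun i j hij => hm (Nat.succ_lt_succ hij),
    fun i => (Nat.zero_le _).trans_lt (hm i.succ_pos), (continuous_fst.tendsto _).comp hlim', ?_⟩
  simpa [Function.comp_def, birkhoffSum] using
    ((continuous_abs.comp continuous_snd).tendsto _).comp hlim'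
end

section
/- Let 𝓕 be a foliation of ℝ×𝕋¹ (possibly with singularities) invariant under the deck translation, such that every leaf has horizontal diameter bounded by a uniform constant m (from Claim: diam(pr₁(l)) < m for every leaf l). Let C ⊂ ℝ×𝕋¹ be a vertical straight essential circle and S(C) the union of all leaves and singularities meeting C. Then cl(S(C)) is a compact essential set, hence an upper generating set, and the circloid 𝓒⁻(S(C)) produced from it is a union of leaves and singularities of 𝓕 (i.e. it is saturated for the associated flow). -/
open Filter Topology Set

/-- The open annulus `ℝ × 𝕋¹`. -/
abbrev OpenAnn := ℝ × UnitAddCircle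

/-- A set is inessential if it is contained in a topological open disc. -/
def Inessential (K : Set OpenAnn) : Prop :=
  ∃ U : Set OpenAnn, IsOpen U ∧ K ⊆ U ∧ Nonempty (U ≃ₜ (ℝ × ℝ))

/-- A set is essential if it is not contained in a topological open disc. -/
def Essential (K : Set OpenAnn) : Prop := ¬ Inessential K

/-- A set is bounded to the left. -/
def BddLeft (U : Set OpenAnn) : Prop := ∃ m : ℝ, ∀ z ∈ U, m ≤ z.1

/-- An upper generating set: bounded to the left with essential closure. -/
def UpperGenerating (U : Set OpenAnn) : Prop := BddLeft U ∧ Essential (closure U)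

/-- The union of the connected components of the complement of `closure U` unbounded to
the left (the associated lower component `𝓛(U)`). -/
def lowerComp (U : Set OpenAnn) : Set OpenAnn :=
  {z | ∃ C : Set OpenAnn, IsPreconnected C ∧ C ⊆ (closure U)ᶜ ∧ z ∈ C ∧
    ∀ m : ℝ, ∃ w ∈ C, w.1 < m}

/-- The union of the connected components of the complement of `closure L` unbounded to
the right (the associated upper component `𝓤(L)`). -/
def upperComp (L : Set OpenAnn) : Set OpenAnn :=
  {z | ∃ C : Set OpenAnn, IsPreconnected C ∧ C ⊆ (closure L)ᶜ ∧ z ∈ C ∧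
    ∀ m : ℝ, ∃ w ∈ C, m < w.1}

/-- A continuous integer-valued function on `ℝ` is constant. -/
private lemma intconst {h : ℝ → ℝ} (hc : Continuous h) (hint : ∀ x, ∃ n : ℤ, h x = n)
    (a b : ℝ) : h a = h b := by
  have key : ∀ u v : ℝ, h u < h v → False := by
    intro u v huv
    obtain ⟨nu, hnu⟩ := hint u
    obtain ⟨nv, hnv⟩ := hint v
    have hn : (nu : ℝ) < (nv : ℝ) := by rw [← hnu, ← hnv]; exact huv
    have hn' : nu < nv := by exact_mod_cast hn
    have hle : (nu : ℝ) + 1 ≤ (nv : ℝ) := by exact_mod_cast hn'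
    have hmem : h u + 1/2 ∈ Set.Icc (h u) (h v) := ⟨by linarith, by rw [hnu, hnv]; linarith⟩
    obtain ⟨x, hx⟩ := (isPreconnected_range hc).Icc_subset ⟨u, rfl⟩ ⟨v, rfl⟩ hmem
    obtain ⟨n, hn2⟩ := hint x
    rw [hn2, hnu] at hx
    have h2 : ((2 * n : ℤ) : ℝ) = ((2 * nu + 1 : ℤ) : ℝ) := by push_cast; linarith
    have := Int.cast_injective (α := ℝ) h2
    omega
  rcases lt_trichotomy (h a) (h b) with h1 | h1 | h1
  · exact (key a b h1).elim
  · exact h1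
  · exact (key b a h1).elim

private noncomputable def rep : UnitAddCircle → ℝ :=
  fun x => ((AddCircle.equivIoc 1 (-(1/2)) x : Set.Ioc (-(1/2) : ℝ) (-(1/2) + 1)) : ℝ)

private lemma rep_coe (x : UnitAddCircle) : ((rep x : ℝ) : UnitAddCircle) = x :=
  (AddCircle.equivIoc 1 (-(1/2))).symm_apply_apply x

private lemma rep_zero : rep 0 = 0 := by
  have h0 : (0 : ℝ) ∈ Set.Ioc (-(1/2) : ℝ) (-(1/2) + 1) := by norm_num
  have h : AddCircle.equivIoc 1 (-(1/2)) (((0 : ℝ)) : UnitAddCircle) = ⟨0, h0⟩ := by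
    rw [Equiv.apply_eq_iff_eq_symm_apply]; rfl
  show ((AddCircle.equivIoc 1 (-(1/2)) 0 : Set.Ioc (-(1/2) : ℝ) (-(1/2) + 1)) : ℝ) = 0
  rw [show (0 : UnitAddCircle) = (((0 : ℝ)) : UnitAddCircle) from rfl, h]

private lemma rep_contAt {x : UnitAddCircle} (hx : ‖x‖ < 1/2) : ContinuousAt rep x := by
  have hne : x ≠ ((-(1/2) : ℝ) : UnitAddCircle) := by
    intro h
    have hcoe : ((-(1/2) : ℝ) : UnitAddCircle) = -(((1/2) : ℝ) : UnitAddCircle) := by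
      exact_mod_cast QuotientAddGroup.mk_neg _ (1/2 : ℝ)
    have hnorm : ‖((-(1/2) : ℝ) : UnitAddCircle)‖ = 1/2 := by
      rw [hcoe, norm_neg]
      have := AddCircle.norm_half_period_eq 1
      norm_num at this
      convert this using 2 <;> norm_num
    rw [h, hnorm] at hx
    linarith
  exact continuous_subtype_val.continuousAt.comp (AddCircle.continuousAt_equivIoc 1 (-(1/2)) hne)

/-- No continuous homotopy on the unit circle from the degree-one loop to a constant loop. -/
private lemma no_degree_homotopy (F : ℝ → ℝ → UnitAddCircle)
    (hFc : Continuous fun p : ℝ × ℝ => F p.1 p.2)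
    (hF0 : ∀ s, F s 0 = (((0 : ℝ)) : UnitAddCircle))
    (hF1 : ∀ s, F s 1 = (((0 : ℝ)) : UnitAddCircle))
    (h0t : ∀ t ∈ Set.Icc (0 : ℝ) 1, F 0 t = ((t : ℝ) : UnitAddCircle))
    (h1t : ∀ t, F 1 t = (((0 : ℝ)) : UnitAddCircle))
    (hclamp : ∀ s t, F s t = F (max 0 (min s 1)) t) : False := by
  classical
  set cl : ℝ → ℝ := fun x => max 0 (min x 1) with hcl
  have hclc : Continuous cl := continuous_const.max (continuous_id.min continuous_const)
  have hclmem : ∀ x, cl x ∈ Set.Icc (0 : ℝ) 1 :=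
    fun x => ⟨le_max_left _ _, max_le (by norm_num) (min_le_right _ _)⟩
  have hcleq : ∀ x ∈ Set.Icc (0 : ℝ) 1, cl x = x := by
    intro x hx
    show max 0 (min x 1) = x
    rw [min_eq_left hx.2, max_eq_right hx.1]
  have hcl0 : cl 0 = 0 := hcleq 0 (by norm_num)
  have hcl1 : cl 1 = 1 := hcleq 1 (by norm_num)
  -- uniform continuity on the unit square
  have hKc : IsCompact (Set.Icc (0 : ℝ) 1 ×ˢ Set.Icc (0 : ℝ) 1) := isCompact_Icc.prod isCompact_Icc
  have huc := hKc.uniformContinuousOn_of_continuous hFc.continuousOn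
  rw [Metric.uniformContinuousOn_iff] at huc
  obtain ⟨d, hd, hduc⟩ := huc (1/2) (by norm_num)
  obtain ⟨n0, hn0⟩ := exists_nat_one_div_lt hd
  set N : ℕ := n0 + 1 with hN
  have hNpos : (0 : ℝ) < (N : ℝ) := by rw [hN]; push_cast; positivity
  have key : ∀ (s a b : ℝ), a ∈ Set.Icc (0 : ℝ) 1 → b ∈ Set.Icc (0 : ℝ) 1 → |a - b| < d →
      ‖F s a - F s b‖ < 1/2 := by
    intro s a b ha hb hab
    have h1 : ((cl s, a) : ℝ × ℝ) ∈ Set.Icc (0 : ℝ) 1 ×ˢ Set.Icc (0 : ℝ) 1 := ⟨hclmem s, ha⟩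
    have h2 : ((cl s, b) : ℝ × ℝ) ∈ Set.Icc (0 : ℝ) 1 ×ˢ Set.Icc (0 : ℝ) 1 := ⟨hclmem s, hb⟩
    have hdist : dist ((cl s, a) : ℝ × ℝ) ((cl s, b) : ℝ × ℝ) < d := by
      rw [Prod.dist_eq]
      apply max_lt
      · rw [dist_self]; exact hd
      · rw [Real.dist_eq]; exact hab
    have := hduc _ h1 _ h2 hdist
    rw [← dist_eq_norm, hclamp s a, hclamp s b]
    exact this
  set node : ℕ → ℝ := fun k => (k : ℝ) / N with hnode
  have hnodemem : ∀ k : ℕ, k ≤ N → node k ∈ Set.Icc (0 : ℝ) 1 := by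
    intro k hk
    constructor
    · positivity
    · rw [hnode]; rw [div_le_one hNpos]; exact_mod_cast hk
  have hnodenn : ∀ k : ℕ, 0 ≤ node k := fun k => by positivity
  have hminmem : ∀ t (k : ℕ), k ≤ N → min (cl t) (node k) ∈ Set.Icc (0 : ℝ) 1 := by
    intro t k hk
    exact ⟨le_min (hclmem t).1 (hnodenn k), le_trans (min_le_left _ _) (hclmem t).2⟩
  have hgap : ∀ t (k : ℕ), |min (cl t) (node (k + 1)) - min (cl t) (node k)| < d := by
    intro t k
    have h1 : |min (cl t) (node (k + 1)) - min (cl t) (node k)|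
        ≤ max |cl t - cl t| |node (k + 1) - node k| := abs_min_sub_min_le_max _ _ _ _
    have h2 : |node (k + 1) - node k| = 1 / (N : ℝ) := by
      have he : node (k + 1) - node k = 1 / (N : ℝ) := by
        simp only [hnode, div_sub_div_same]
        congr 1
        push_cast
        ring
      rw [he, abs_of_pos (by positivity)]
    have h3 : (1 : ℝ) / N < d := by simp only [hN]; push_cast; exact hn0
    calc |min (cl t) (node (k + 1)) - min (cl t) (node k)|
        ≤ max |cl t - cl t| |node (k + 1) - node k| := h1
      _ = |node (k + 1) - node k| := by rw [sub_self, abs_zero]; exact max_eq_right (abs_nonneg _)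
      _ < d := by rw [h2]; exact h3
  have hsummand : ∀ s t (k : ℕ), k < N →
      ‖F s (min (cl t) (node (k + 1))) - F s (min (cl t) (node k))‖ < 1/2 := by
    intro s t k hk
    exact key s _ _ (hminmem t (k + 1) hk) (hminmem t k hk.le) (hgap t k)
  set Ftil : ℝ → ℝ → ℝ := fun s t =>
    ∑ k ∈ Finset.range N, rep (F s (min (cl t) (node (k + 1))) - F s (min (cl t) (node k)))
    with hFtil
  have hFtilc : Continuous fun p : ℝ × ℝ => Ftil p.1 p.2 := by
    apply continuous_finset_sum
    intro k hk
    rw [Finset.mem_range] at hk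
    rw [continuous_iff_continuousAt]
    intro p
    have hgc : Continuous fun p : ℝ × ℝ =>
        F p.1 (min (cl p.2) (node (k + 1))) - F p.1 (min (cl p.2) (node k)) := by
      apply Continuous.sub
      · exact hFc.comp (continuous_fst.prodMk ((hclc.comp continuous_snd).min continuous_const))
      · exact hFc.comp (continuous_fst.prodMk ((hclc.comp continuous_snd).min continuous_const))
    show ContinuousAt (rep ∘ fun p : ℝ × ℝ =>
        F p.1 (min (cl p.2) (node (k + 1))) - F p.1 (min (cl p.2) (node k))) p
    exact ContinuousAt.comp (rep_contAt (hsummand p.1 p.2 k hk)) hgc.continuousAt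
  have hFtilcoe : ∀ s t, ((Ftil s t : ℝ) : UnitAddCircle) = F s (cl t) := by
    intro s t
    have hmap : ((Ftil s t : ℝ) : UnitAddCircle) =
        ∑ k ∈ Finset.range N,
          ((rep (F s (min (cl t) (node (k + 1))) - F s (min (cl t) (node k))) : ℝ) :
            UnitAddCircle) :=
      map_sum (QuotientAddGroup.mk' (AddSubgroup.zmultiples (1 : ℝ))) _ _
    rw [hmap]
    simp_rw [rep_coe]
    rw [Finset.sum_range_sub (fun k => F s (min (cl t) (node k))) N]
    have hnN : node N = 1 := by rw [hnode]; exact div_self hNpos.ne'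
    have hn0' : node 0 = 0 := by rw [hnode]; simp
    rw [hnN, hn0', min_eq_left (hclmem t).2, min_eq_right (hclmem t).1, hF0 s]
    rw [show (((0 : ℝ)) : UnitAddCircle) = 0 from rfl, sub_zero]
  -- w(s) = Ftil s 1 is a continuous integer-valued function
  have hw_cont : Continuous fun s => Ftil s 1 :=
    hFtilc.comp (continuous_id.prodMk continuous_const)
  have hw_int : ∀ s, ∃ n : ℤ, Ftil s 1 = n := by
    intro s
    have h : ((Ftil s 1 : ℝ) : UnitAddCircle) = 0 := by
      rw [hFtilcoe, hcl1, hF1 s]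
      rfl
    rw [AddCircle.coe_eq_zero_iff] at h
    obtain ⟨n, hn⟩ := h
    exact ⟨n, by rw [← hn]; simp⟩
  have hFtil11 : Ftil 1 1 = 0 := by
    apply Finset.sum_eq_zero
    intro k _
    rw [h1t, h1t, sub_self, rep_zero]
  have hFtil01 : Ftil 0 1 = 1 := by
    have hu_cont : Continuous fun t => Ftil 0 t - cl t :=
      (hFtilc.comp (continuous_const.prodMk continuous_id)).sub hclc
    have hu_int : ∀ t, ∃ n : ℤ, Ftil 0 t - cl t = n := by
      intro t
      have h : ((Ftil 0 t - cl t : ℝ) : UnitAddCircle) = 0 := by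
        rw [show ((Ftil 0 t - cl t : ℝ) : UnitAddCircle)
            = ((Ftil 0 t : ℝ) : UnitAddCircle) - ((cl t : ℝ) : UnitAddCircle) from
          QuotientAddGroup.mk_sub _ _ _]
        rw [hFtilcoe, h0t (cl t) (hclmem t), sub_self]
      rw [AddCircle.coe_eq_zero_iff] at h
      obtain ⟨n, hn⟩ := h
      exact ⟨n, by rw [← hn]; simp⟩
    have h00 : Ftil 0 0 - cl 0 = 0 := by
      have hz : Ftil 0 0 = 0 := by
        apply Finset.sum_eq_zero
        intro k _
        rw [hcl0, min_eq_left (hnodenn (k + 1)), min_eq_left (hnodenn k), sub_self, rep_zero]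
      rw [hz, hcl0, sub_zero]
    have := intconst hu_cont hu_int 1 0
    rw [h00, hcl1] at this
    linarith
  have := intconst hw_cont hw_int 0 1
  rw [hFtil01, hFtil11] at this
  norm_num at this

/-- The vertical circle `{z | z.1 = c}` is essential in the annulus. -/
private lemma essential_vline (c : ℝ) : Essential {z : OpenAnn | z.1 = c} := by
  rintro ⟨U, hUo, hCU, ⟨e⟩⟩
  have hmem : ∀ t : ℝ, ((c, ((t : ℝ) : UnitAddCircle)) : OpenAnn) ∈ U := fun t => hCU rfl
  set γ : ℝ → U := fun t => ⟨(c, ((t : ℝ) : UnitAddCircle)), hmem t⟩ with hγ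
  have hγc : Continuous γ := by
    apply Continuous.subtype_mk
    exact continuous_const.prodMk (AddCircle.continuous_mk' 1)
  have hγ10 : γ 1 = γ 0 := by
    have h10 : ((1 : ℝ) : UnitAddCircle) = ((0 : ℝ) : UnitAddCircle) := by
      simp [AddCircle.coe_period]
    apply Subtype.ext
    show ((c, ((1 : ℝ) : UnitAddCircle)) : OpenAnn) = ((c, ((0 : ℝ) : UnitAddCircle)) : OpenAnn)
    rw [h10]
  set δ : ℝ → ℝ × ℝ := fun t => e (γ t) with hδ
  have hδc : Continuous δ := e.continuous.comp hγc
  have hδ10 : δ 1 = δ 0 := by rw [hδ]; show e (γ 1) = e (γ 0); rw [hγ10]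
  set cl : ℝ → ℝ := fun x => max 0 (min x 1) with hcl
  have hclc : Continuous cl := continuous_const.max (continuous_id.min continuous_const)
  have hclmem : ∀ x, cl x ∈ Set.Icc (0 : ℝ) 1 :=
    fun x => ⟨le_max_left _ _, max_le (by norm_num) (min_le_right _ _)⟩
  have hcleq : ∀ x ∈ Set.Icc (0 : ℝ) 1, cl x = x := by
    intro x hx
    show max 0 (min x 1) = x
    rw [min_eq_left hx.2, max_eq_right hx.1]
  have hcl0 : cl 0 = 0 := hcleq 0 (by norm_num)
  have hcl1 : cl 1 = 1 := hcleq 1 (by norm_num)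
  set F : ℝ → ℝ → UnitAddCircle :=
    fun s t => (((e.symm ((1 - cl s) • δ (cl t) + cl s • δ 0) : U) : OpenAnn)).2 with hF
  have combo : ∀ s (x : ℝ × ℝ), (1 - cl s) • x + cl s • x = x := by
    intro s x
    rw [sub_smul, one_smul, sub_add_cancel]
  have hFc : Continuous fun p : ℝ × ℝ => F p.1 p.2 := by
    apply continuous_snd.comp
    apply continuous_subtype_val.comp
    apply e.symm.continuous.comp
    exact ((continuous_const.sub (hclc.comp continuous_fst)).smul
        (hδc.comp (hclc.comp continuous_snd))).add
      ((hclc.comp continuous_fst).smul continuous_const)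
  have hγ2 : ∀ t : ℝ, ((γ t : OpenAnn)).2 = ((t : ℝ) : UnitAddCircle) := fun t => rfl
  have hF0 : ∀ s, F s 0 = (((0 : ℝ)) : UnitAddCircle) := by
    intro s
    show (((e.symm ((1 - cl s) • δ (cl 0) + cl s • δ 0) : U) : OpenAnn)).2 = _
    rw [hcl0, combo, hδ]
    show (((e.symm (e (γ 0)) : U) : OpenAnn)).2 = _
    rw [e.symm_apply_apply]
  have hF1 : ∀ s, F s 1 = (((0 : ℝ)) : UnitAddCircle) := by
    intro s
    show (((e.symm ((1 - cl s) • δ (cl 1) + cl s • δ 0) : U) : OpenAnn)).2 = _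
    rw [hcl1, hδ10, combo, hδ]
    show (((e.symm (e (γ 0)) : U) : OpenAnn)).2 = _
    rw [e.symm_apply_apply]
  have h0t : ∀ t ∈ Set.Icc (0 : ℝ) 1, F 0 t = ((t : ℝ) : UnitAddCircle) := by
    intro t ht
    show (((e.symm ((1 - cl 0) • δ (cl t) + cl 0 • δ 0) : U) : OpenAnn)).2 = _
    rw [hcl0, sub_zero, one_smul, zero_smul, add_zero, hδ]
    show (((e.symm (e (γ (cl t))) : U) : OpenAnn)).2 = _
    rw [e.symm_apply_apply, hγ2, hcleq t ht]
  have h1t : ∀ t, F 1 t = (((0 : ℝ)) : UnitAddCircle) := by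
    intro t
    show (((e.symm ((1 - cl 1) • δ (cl t) + cl 1 • δ 0) : U) : OpenAnn)).2 = _
    rw [hcl1, sub_self, zero_smul, one_smul, zero_add, hδ]
    show (((e.symm (e (γ 0)) : U) : OpenAnn)).2 = _
    rw [e.symm_apply_apply]
  have hclamp : ∀ s t, F s t = F (max 0 (min s 1)) t := by
    intro s t
    show _ = (((e.symm ((1 - cl (cl s)) • δ (cl t) + cl (cl s) • δ 0) : U) : OpenAnn)).2
    rw [hcleq (cl s) (hclmem s)]
  exact no_degree_homotopy F hFc hF0 hF1 h0t h1t hclamp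

section FlowAux

variable (φ : ℝ → OpenAnn → OpenAnn)

/-- Total invariance of a set under the flow. -/
private def FlowInv (A : Set OpenAnn) : Prop := ∀ (t : ℝ) (z : OpenAnn), z ∈ A → φ t z ∈ A

variable {φ}

private lemma flowInv_contt (hcont : Continuous fun p : ℝ × OpenAnn => φ p.1 p.2) (t : ℝ) :
    Continuous (φ t) :=
  hcont.comp (continuous_const.prodMk continuous_id)

private lemma FlowInv.closure' (hcont : Continuous fun p : ℝ × OpenAnn => φ p.1 p.2)
    {A : Set OpenAnn} (h : FlowInv φ A) : FlowInv φ (closure A) := by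
  intro t z hz
  exact (Set.MapsTo.closure (fun w hw => h t w hw) (flowInv_contt hcont t)) hz

private lemma FlowInv.compl' (hφ0 : ∀ z, φ 0 z = z)
    (hφadd : ∀ s t z, φ (s + t) z = φ s (φ t z))
    {A : Set OpenAnn} (h : FlowInv φ A) : FlowInv φ Aᶜ := by
  intro t z hz hmem
  apply hz
  have := h (-t) _ hmem
  rwa [← hφadd, neg_add_cancel, hφ0] at this

private lemma FlowInv.lowerComp' (hcont : Continuous fun p : ℝ × OpenAnn => φ p.1 p.2)
    (hφ0 : ∀ z, φ 0 z = z) (hφadd : ∀ s t z, φ (s + t) z = φ s (φ t z))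
    {m : ℝ} (hm : ∀ (z : OpenAnn) (s t : ℝ), |(φ s z).1 - (φ t z).1| < m)
    {A : Set OpenAnn} (h : FlowInv φ A) : FlowInv φ (lowerComp A) := by
  rintro t z ⟨Cz, hCp, hCsub, hzC, hunb⟩
  have hAc : FlowInv φ (closure A)ᶜ := (h.closure' hcont).compl' hφ0 hφadd
  refine ⟨φ t '' Cz, hCp.image _ (flowInv_contt hcont t).continuousOn, ?_, ⟨z, hzC, rfl⟩, ?_⟩
  · rintro w ⟨w0, hw0, rfl⟩
    exact hAc t w0 (hCsub hw0)
  · intro M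
    obtain ⟨w0, hw0, hlt⟩ := hunb (M - m)
    refine ⟨φ t w0, ⟨w0, hw0, rfl⟩, ?_⟩
    have h1 := hm w0 t 0
    rw [hφ0] at h1
    have h2 := (abs_lt.mp h1).2
    linarith

private lemma FlowInv.upperComp' (hcont : Continuous fun p : ℝ × OpenAnn => φ p.1 p.2)
    (hφ0 : ∀ z, φ 0 z = z) (hφadd : ∀ s t z, φ (s + t) z = φ s (φ t z))
    {m : ℝ} (hm : ∀ (z : OpenAnn) (s t : ℝ), |(φ s z).1 - (φ t z).1| < m)
    {A : Set OpenAnn} (h : FlowInv φ A) : FlowInv φ (upperComp A) := by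
  rintro t z ⟨Cz, hCp, hCsub, hzC, hunb⟩
  have hAc : FlowInv φ (closure A)ᶜ := (h.closure' hcont).compl' hφ0 hφadd
  refine ⟨φ t '' Cz, hCp.image _ (flowInv_contt hcont t).continuousOn, ?_, ⟨z, hzC, rfl⟩, ?_⟩
  · rintro w ⟨w0, hw0, rfl⟩
    exact hAc t w0 (hCsub hw0)
  · intro M
    obtain ⟨w0, hw0, hlt⟩ := hunb (M + m)
    refine ⟨φ t w0, ⟨w0, hw0, rfl⟩, ?_⟩
    have h1 := hm w0 t 0
    rw [hφ0] at h1
    have h2 := (abs_lt.mp h1).1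
    linarith

private lemma FlowInv.union' {A B : Set OpenAnn} (hA : FlowInv φ A) (hB : FlowInv φ B) :
    FlowInv φ (A ∪ B) := by
  rintro t z (hz | hz)
  · exact Or.inl (hA t z hz)
  · exact Or.inr (hB t z hz)

end FlowAux

/-- Let `𝓕` be an oriented (possibly singular) foliation of `ℝ × 𝕋¹`, embedded in a
continuous flow `φ` (Whitney–Gutiérrez), invariant under the deck translation, and such
that every leaf (= orbit) has horizontal diameter less than a uniform `m`.  If `C` is a
vertical straight essential circle and `S(C)` is the union of all leaves and
singularities meeting `C` (its saturation, `S = {z : ∃ t, φ_t(z) ∈ C}`), then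
`closure S(C)` is a compact essential set, `S(C)` is an upper generating set, and the
circloid `𝓒⁻(S(C)) = (ℝ×𝕋¹) ∖ (𝓤𝓛(S) ∪ 𝓛𝓤𝓛(S))` obtained from it is a union of leaves
and singularities of `𝓕`, i.e. totally invariant under the flow. -/
theorem circloid_of_saturation_is_saturated
    (φ : ℝ → OpenAnn → OpenAnn)
    (hcont : Continuous fun p : ℝ × OpenAnn => φ p.1 p.2)
    (hφ0 : ∀ z, φ 0 z = z)
    (hφadd : ∀ s t z, φ (s + t) z = φ s (φ t z))
    (hdeck : ∀ (t : ℝ) (z : OpenAnn), φ t (z.1 + 1, z.2) = ((φ t z).1 + 1, (φ t z).2))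
    (m : ℝ) (hm : ∀ (z : OpenAnn) (s t : ℝ), |(φ s z).1 - (φ t z).1| < m)
    (c : ℝ) (C : Set OpenAnn) (hC : C = {z : OpenAnn | z.1 = c})
    (S : Set OpenAnn) (hS : S = {z : OpenAnn | ∃ t : ℝ, φ t z ∈ C})
    (Cm : Set OpenAnn)
    (hCm : Cm = (upperComp (lowerComp S) ∪ lowerComp (upperComp (lowerComp S)))ᶜ) :
    IsCompact (closure S) ∧ Essential (closure S) ∧ UpperGenerating S ∧
      ∀ z ∈ Cm, ∀ t : ℝ, φ t z ∈ Cm := by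
  -- Basic facts about `S`
  have hSsub : ∀ z ∈ S, |c - z.1| < m := by
    intro z hz
    rw [hS] at hz
    obtain ⟨t, ht⟩ := hz
    rw [hC] at ht
    have h1 := hm z t 0
    rw [hφ0, ht] at h1
    exact h1
  have hCS : C ⊆ S := by
    intro z hz
    rw [hS]
    exact ⟨0, by rw [hφ0]; exact hz⟩
  -- Compactness
  have hKcl : IsClosed ((Set.Icc (c - m) (c + m)) ×ˢ (Set.univ : Set UnitAddCircle)) :=
    isClosed_Icc.prod isClosed_univ
  have hKcp : IsCompact ((Set.Icc (c - m) (c + m)) ×ˢ (Set.univ : Set UnitAddCircle)) :=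
    isCompact_Icc.prod isCompact_univ
  have hSK : S ⊆ (Set.Icc (c - m) (c + m)) ×ˢ (Set.univ : Set UnitAddCircle) := by
    intro z hz
    have := hSsub z hz
    have h2 := abs_lt.mp this
    exact ⟨⟨by linarith [h2.2], by linarith [h2.1]⟩, Set.mem_univ _⟩
  have hcomp : IsCompact (closure S) :=
    hKcp.of_isClosed_subset isClosed_closure (closure_minimal hSK hKcl)
  -- Essentialness
  have hess : Essential (closure S) := by
    intro ⟨U, hUo, hsub, he⟩
    exact essential_vline c ⟨U, hUo, fun z hz => hsub (subset_closure (hCS (hC ▸ hz))), he⟩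
  -- Invariance
  have hSinv : FlowInv φ S := by
    intro t z hz
    rw [hS] at hz ⊢
    obtain ⟨u, hu⟩ := hz
    refine ⟨u - t, ?_⟩
    rw [← hφadd, sub_add_cancel]
    exact hu
  have hInv1 : FlowInv φ (lowerComp S) := hSinv.lowerComp' hcont hφ0 hφadd hm
  have hInv2 : FlowInv φ (upperComp (lowerComp S)) := hInv1.upperComp' hcont hφ0 hφadd hm
  have hInv3 : FlowInv φ (lowerComp (upperComp (lowerComp S))) :=
    hInv2.lowerComp' hcont hφ0 hφadd hm
  have hInvCm : FlowInv φ Cm := by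
    rw [hCm]
    exact (hInv2.union' hInv3).compl' hφ0 hφadd
  refine ⟨hcomp, hess, ⟨⟨c - m, ?_⟩, hess⟩, fun z hz t => hInvCm t z hz⟩
  intro z hz
  have := (abs_lt.mp (hSsub z hz)).2
  linarith
end
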